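/- arXiv:2310.09511 — 7 statements merged into one kernel-verified Lean document; each statement's English description precedes it below -/
import Mathlib

section
/- Let A ∈ ℝ^{q×q} be symmetric and suppose there exists α > 0 with zᵀAz ≥ α‖z‖₂² for all z ∈ ℝ^q (so A is positive definite with smallest eigenvalue at least α). Let K := {z ∈ ℝ^q : the first m coordinates of z are ≥ 0}. If z₁ minimizes z ↦ zᵀAz + 2⟨w₁, z⟩ over K and z₂ minimizes z ↦ zᵀAz + 2⟨w₂, z⟩ over K, then ‖z₁ − z₂‖₂ ≤ (1/α)·‖w₁ − w₂‖₂. -/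
open Matrix

/-- The Euclidean (ℓ²) norm of a vector in `Fin n → ℝ`. -/
noncomputable def euclNorm {n : ℕ} (v : Fin n → ℝ) : ℝ :=
  ‖(EuclideanSpace.equiv (Fin n) ℝ).symm v‖

/-!
A minimizer `z` of `f_w(z) = zᵀAz + 2⟨w, z⟩` over a convex set `K` satisfies the variational
inequality `⟨Az + w, y - z⟩ ≥ 0` for all `y ∈ K`, obtained by comparing `f_w(z)` with `f_w` at
`z + t (y - z)` and letting `t → 0⁺`. Testing the inequalities of two minimizers `z₁, z₂` against
each other and adding gives `(z₁ - z₂)ᵀA(z₁ - z₂) ≤ ⟨w₂ - w₁, z₁ - z₂⟩`; coercivity bounds the left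
side below by `α‖z₁ - z₂‖²` and Cauchy–Schwarz bounds the right side by `‖w₁ - w₂‖‖z₁ - z₂‖`.
-/

open Filter Topology

lemma nonneg_of_forall_pos_le_one_add_mul_nonneg {a b : ℝ}
    (h : ∀ t : ℝ, 0 < t → t ≤ 1 → 0 ≤ a + t * b) : 0 ≤ a := by
  have hlim : Tendsto (fun t : ℝ => a + t * b) (𝓝[>] 0) (𝓝 a) := by
    have hcont : Continuous fun t : ℝ => a + t * b := by fun_prop
    simpa using (hcont.tendsto 0).mono_left nhdsWithin_le_nhds
  refine ge_of_tendsto hlim ?_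
  filter_upwards [Ioc_mem_nhdsGT zero_lt_one] with t ht using h t ht.1 ht.2

namespace Matrix

variable {ι : Type*} [Fintype ι] {A : Matrix ι ι ℝ}

lemma IsSymm.dotProduct_mulVec_comm (hA : A.IsSymm) (u v : ι → ℝ) :
    u ⬝ᵥ A *ᵥ v = v ⬝ᵥ A *ᵥ u := by
  rw [dotProduct_mulVec, ← hA.eq, vecMul_transpose, dotProduct_comm, hA.eq]

def quadObj (A : Matrix ι ι ℝ) (w z : ι → ℝ) : ℝ :=
  z ⬝ᵥ A *ᵥ z + 2 * (w ⬝ᵥ z)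

lemma IsSymm.quadObj_add_smul (hA : A.IsSymm) (w z d : ι → ℝ) (t : ℝ) :
    quadObj A w (z + t • d) =
      quadObj A w z + t * (2 * ((A *ᵥ z + w) ⬝ᵥ d) + t * (d ⬝ᵥ A *ᵥ d)) := by
  have hzd := hA.dotProduct_mulVec_comm z d
  simp only [quadObj, mulVec_add, mulVec_smul, dotProduct_add, add_dotProduct,
    dotProduct_smul, smul_dotProduct, smul_eq_mul, dotProduct_comm (A *ᵥ z) d]
  linear_combination t * hzd

lemma IsSymm.variational_inequality_of_isMinOn (hA : A.IsSymm) {K : Set (ι → ℝ)}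
    (hK : Convex ℝ K) {w z : ι → ℝ} (hz : z ∈ K) (hmin : IsMinOn (quadObj A w) K z)
    {y : ι → ℝ} (hy : y ∈ K) : 0 ≤ (A *ᵥ z + w) ⬝ᵥ (y - z) := by
  suffices 0 ≤ 2 * ((A *ᵥ z + w) ⬝ᵥ (y - z)) by linarith
  refine nonneg_of_forall_pos_le_one_add_mul_nonneg (b := (y - z) ⬝ᵥ A *ᵥ (y - z))
    fun t ht0 ht1 => ?_
  have hseg : z + t • (y - z) ∈ K := hK.add_smul_sub_mem hz hy ⟨ht0.le, ht1⟩
  have hle := isMinOn_iff.1 hmin _ hseg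
  rw [hA.quadObj_add_smul] at hle
  exact nonneg_of_mul_nonneg_right (by linarith) ht0

lemma IsSymm.quadForm_sub_le_of_isMinOn (hA : A.IsSymm) {K : Set (ι → ℝ)} (hK : Convex ℝ K)
    {w₁ w₂ z₁ z₂ : ι → ℝ} (hz₁ : z₁ ∈ K) (hz₂ : z₂ ∈ K)
    (hmin₁ : IsMinOn (quadObj A w₁) K z₁) (hmin₂ : IsMinOn (quadObj A w₂) K z₂) :
    (z₁ - z₂) ⬝ᵥ A *ᵥ (z₁ - z₂) ≤ (w₂ - w₁) ⬝ᵥ (z₁ - z₂) := by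
  have h₁ := hA.variational_inequality_of_isMinOn hK hz₁ hmin₁ hz₂
  have h₂ := hA.variational_inequality_of_isMinOn hK hz₂ hmin₂ hz₁
  have hsum : (A *ᵥ z₁ + w₁) ⬝ᵥ (z₂ - z₁) + (A *ᵥ z₂ + w₂) ⬝ᵥ (z₁ - z₂) =
      (w₂ - w₁) ⬝ᵥ (z₁ - z₂) - (z₁ - z₂) ⬝ᵥ A *ᵥ (z₁ - z₂) := by
    simp only [mulVec_sub, dotProduct_sub, sub_dotProduct, add_dotProduct,
      dotProduct_comm (A *ᵥ z₁), dotProduct_comm (A *ᵥ z₂)]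
    ring
  linarith

end Matrix

lemma euclNorm_nonneg {n : ℕ} (v : Fin n → ℝ) : 0 ≤ euclNorm v := norm_nonneg _

lemma euclNorm_sub_comm {n : ℕ} (u v : Fin n → ℝ) : euclNorm (u - v) = euclNorm (v - u) := by
  simp only [euclNorm, map_sub, norm_sub_rev]

lemma dotProduct_le_euclNorm_mul {n : ℕ} (u v : Fin n → ℝ) :
    u ⬝ᵥ v ≤ euclNorm u * euclNorm v := by
  have h := real_inner_le_norm ((EuclideanSpace.equiv (Fin n) ℝ).symm u)
    ((EuclideanSpace.equiv (Fin n) ℝ).symm v)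
  simpa [euclNorm, PiLp.inner_apply, dotProduct, mul_comm] using h

lemma Matrix.IsSymm.euclNorm_sub_le_of_isMinOn {n : ℕ} {A : Matrix (Fin n) (Fin n) ℝ}
    (hA : A.IsSymm) {α : ℝ} (hα : 0 < α)
    (hcoercive : ∀ z : Fin n → ℝ, α * euclNorm z ^ 2 ≤ z ⬝ᵥ A *ᵥ z)
    {K : Set (Fin n → ℝ)} (hK : Convex ℝ K) {w₁ w₂ z₁ z₂ : Fin n → ℝ}
    (hz₁ : z₁ ∈ K) (hz₂ : z₂ ∈ K)
    (hmin₁ : IsMinOn (quadObj A w₁) K z₁) (hmin₂ : IsMinOn (quadObj A w₂) K z₂) :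
    euclNorm (z₁ - z₂) ≤ (1 / α) * euclNorm (w₁ - w₂) := by
  have hsq : α * euclNorm (z₁ - z₂) ^ 2 ≤ euclNorm (w₁ - w₂) * euclNorm (z₁ - z₂) :=
    calc α * euclNorm (z₁ - z₂) ^ 2 ≤ (z₁ - z₂) ⬝ᵥ A *ᵥ (z₁ - z₂) := hcoercive _
      _ ≤ (w₂ - w₁) ⬝ᵥ (z₁ - z₂) := hA.quadForm_sub_le_of_isMinOn hK hz₁ hz₂ hmin₁ hmin₂
      _ ≤ euclNorm (w₂ - w₁) * euclNorm (z₁ - z₂) := dotProduct_le_euclNorm_mul _ _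
      _ = euclNorm (w₁ - w₂) * euclNorm (z₁ - z₂) := by rw [euclNorm_sub_comm w₂]
  rw [one_div_mul_eq_div, le_div_iff₀' hα]
  rcases (euclNorm_nonneg (z₁ - z₂)).eq_or_lt with h0 | hpos
  · rw [← h0, mul_zero]
    exact euclNorm_nonneg _
  · exact le_of_mul_le_mul_right (by linarith [hsq]) hpos

lemma convex_setOf_nonneg_of_lt {n : ℕ} (m : ℕ) :
    Convex ℝ {y : Fin n → ℝ | ∀ i : Fin n, (i : ℕ) < m → 0 ≤ y i} :=
  fun _ hx _ hy _ _ ha hb _ i hi =>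
    add_nonneg (mul_nonneg ha (hx i hi)) (mul_nonneg hb (hy i hi))

theorem stmt2 {m p : ℕ} (A : Matrix (Fin (m + p)) (Fin (m + p)) ℝ) (hA : A.IsSymm)
    (α : ℝ) (hα : 0 < α)
    (hcoercive : ∀ z : Fin (m + p) → ℝ, α * euclNorm z ^ 2 ≤ z ⬝ᵥ A *ᵥ z)
    (w₁ w₂ z₁ z₂ : Fin (m + p) → ℝ)
    (hz₁K : ∀ i : Fin (m + p), (i : ℕ) < m → 0 ≤ z₁ i)
    (hz₂K : ∀ i : Fin (m + p), (i : ℕ) < m → 0 ≤ z₂ i)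
    (hz₁min : ∀ y : Fin (m + p) → ℝ, (∀ i : Fin (m + p), (i : ℕ) < m → 0 ≤ y i) →
      z₁ ⬝ᵥ A *ᵥ z₁ + 2 * (w₁ ⬝ᵥ z₁) ≤ y ⬝ᵥ A *ᵥ y + 2 * (w₁ ⬝ᵥ y))
    (hz₂min : ∀ y : Fin (m + p) → ℝ, (∀ i : Fin (m + p), (i : ℕ) < m → 0 ≤ y i) →
      z₂ ⬝ᵥ A *ᵥ z₂ + 2 * (w₂ ⬝ᵥ z₂) ≤ y ⬝ᵥ A *ᵥ y + 2 * (w₂ ⬝ᵥ y)) :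
    euclNorm (z₁ - z₂) ≤ (1 / α) * euclNorm (w₁ - w₂) :=
  hA.euclNorm_sub_le_of_isMinOn hα hcoercive (convex_setOf_nonneg_of_lt m) hz₁K hz₂K
    (isMinOn_iff.2 hz₁min) (isMinOn_iff.2 hz₂min)
end

section
/- Let ∇h ∈ ℝ^{n×m} and ∇g ∈ ℝ^{n×p} be real matrices such that the columns of the concatenated matrix [∇h, ∇g] are linearly independent, let H ∈ ℝ^{m×m} be a diagonal matrix, and define R := I − ∇g(∇gᵀ∇g)⁻¹∇gᵀ. Then both ∇hᵀR∇h and P := ∇hᵀR∇h + H² are symmetric positive definite matrices in ℝ^{m×m}; in particular both are invertible. -/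
/-!
`R` is the orthogonal projector onto the orthogonal complement of the column space of `∇g`, so
`∇hᵀ R ∇h = (R ∇h)ᵀ (R ∇h)` is a Gram matrix. It is positive definite because `R ∇h` is injective:
`R ∇h v = 0` writes `∇h v` as a combination of the columns of `∇g`, which the linear independence
of `[∇h, ∇g]` rules out unless `v = 0`. Adding the positive semidefinite `H² = Hᵀ H` keeps it
positive definite.
-/

open Matrix

namespace Matrix

section CommRing

variable {R : Type*} [CommRing R] {n p q : Type*} [Fintype n] [Fintype p] [DecidableEq p]

/-- Orthogonal projector onto the orthogonal complement of the column space of `A`, when `Aᵀ * A`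
is invertible. -/
noncomputable def orthProjCompl [DecidableEq n] (A : Matrix n p R) : Matrix n n R :=
  1 - A * (Aᵀ * A)⁻¹ * Aᵀ

theorem isSymm_orthProjCompl [DecidableEq n] (A : Matrix n p R) : (orthProjCompl A).IsSymm := by
  have hG : (Aᵀ * A)⁻¹ᵀ = (Aᵀ * A)⁻¹ := by
    rw [transpose_nonsing_inv, transpose_mul, transpose_transpose]
  simp only [orthProjCompl, IsSymm, transpose_sub, transpose_one, transpose_mul,
    transpose_transpose, hG, Matrix.mul_assoc]

theorem isIdempotentElem_orthProjCompl [DecidableEq n] (A : Matrix n p R)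
    (hA : IsUnit (Aᵀ * A).det) : IsIdempotentElem (orthProjCompl A) := by
  refine IsIdempotentElem.one_sub ?_
  calc A * (Aᵀ * A)⁻¹ * Aᵀ * (A * (Aᵀ * A)⁻¹ * Aᵀ)
      = A * ((Aᵀ * A)⁻¹ * (Aᵀ * A)) * (Aᵀ * A)⁻¹ * Aᵀ := by simp only [Matrix.mul_assoc]
    _ = A * (Aᵀ * A)⁻¹ * Aᵀ := by rw [nonsing_inv_mul _ hA, Matrix.mul_one, Matrix.mul_assoc]

theorem transpose_mul_mul_eq_of_isSymm_of_isIdempotentElem {P : Matrix n n R} (hP : P.IsSymm)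
    (hP' : IsIdempotentElem P) (B : Matrix n q R) : Bᵀ * P * B = (P * B)ᵀ * (P * B) := by
  rw [transpose_mul, hP.eq, ← Matrix.mul_assoc, Matrix.mul_assoc Bᵀ P P, hP'.eq]

theorem injective_mulVec_orthProjCompl_mul [Fintype q] [DecidableEq n] {A : Matrix n p R}
    {B : Matrix n q R}
    (hAB : ∀ v w, B *ᵥ v + A *ᵥ w = 0 → v = 0 ∧ w = 0) :
    Function.Injective (orthProjCompl A * B).mulVec := by
  refine (injective_iff_map_eq_zero (orthProjCompl A * B).mulVecLin).mpr fun v hv => ?_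
  refine (hAB v (-((Aᵀ * A)⁻¹ * Aᵀ * B) *ᵥ v) ?_).1
  rw [mulVecLin_apply, orthProjCompl] at hv
  rw [← hv, Matrix.sub_mul, Matrix.one_mul, sub_mulVec, neg_mulVec, mulVec_neg, mulVec_mulVec,
    ← sub_eq_add_neg, Matrix.mul_assoc A, Matrix.mul_assoc A]

end CommRing

theorem posDef_transpose_mul_self {n p : Type*} [Fintype n] [Fintype p] {A : Matrix n p ℝ}
    (hA : Function.Injective A.mulVec) : (Aᵀ * A).PosDef := by
  simpa only [conjTranspose_eq_transpose_of_trivial] using PosDef.conjTranspose_mul_self A hA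

theorem posDef_transpose_mul_orthProjCompl_mul {n p q : Type*} [Fintype n] [Fintype p]
    [Fintype q] [DecidableEq n] [DecidableEq p] {A : Matrix n p ℝ} {B : Matrix n q ℝ}
    (hAB : ∀ v w, B *ᵥ v + A *ᵥ w = 0 → v = 0 ∧ w = 0) :
    (Bᵀ * orthProjCompl A * B).PosDef := by
  have hA : Function.Injective A.mulVec :=
    (injective_iff_map_eq_zero A.mulVecLin).mpr fun w hw => (hAB 0 w (by simpa using hw)).2
  have hGram : IsUnit (Aᵀ * A).det :=
    (isUnit_iff_isUnit_det _).mp (posDef_transpose_mul_self hA).isUnit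
  rw [transpose_mul_mul_eq_of_isSymm_of_isIdempotentElem (isSymm_orthProjCompl A)
    (isIdempotentElem_orthProjCompl A hGram)]
  exact posDef_transpose_mul_self (injective_mulVec_orthProjCompl_mul hAB)

end Matrix

theorem stmt7 {n m p : ℕ} (gradh : Matrix (Fin n) (Fin m) ℝ)
    (gradg : Matrix (Fin n) (Fin p) ℝ)
    (H : Matrix (Fin m) (Fin m) ℝ) (hH : H.IsDiag)
    (hli : ∀ (w₁ : Fin m → ℝ) (w₂ : Fin p → ℝ),
      gradh *ᵥ w₁ + gradg *ᵥ w₂ = 0 → w₁ = 0 ∧ w₂ = 0)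
    (R : Matrix (Fin n) (Fin n) ℝ)
    (hR : R = 1 - gradg * (gradgᵀ * gradg)⁻¹ * gradgᵀ) :
    (gradhᵀ * R * gradh).PosDef ∧ (gradhᵀ * R * gradh + H * H).PosDef ∧
      IsUnit (gradhᵀ * R * gradh) ∧ IsUnit (gradhᵀ * R * gradh + H * H) := by
  obtain rfl : R = orthProjCompl gradg := hR
  have hM : (gradhᵀ * orthProjCompl gradg * gradh).PosDef :=
    posDef_transpose_mul_orthProjCompl_mul hli
  have hH2 : (H * H).PosSemidef := by
    simpa only [conjTranspose_eq_transpose_of_trivial, hH.isSymm.eq]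
      using posSemidef_conjTranspose_mul_self H
  have hP := hM.add_posSemidef hH2
  exact ⟨hM, hP, hM.isUnit, hP.isUnit⟩
end

section
/- Let ∇h ∈ ℝ^{n×m} and ∇g ∈ ℝ^{n×p} be real matrices such that the columns of the concatenated matrix [∇h, ∇g] are linearly independent, let H ∈ ℝ^{m×m} be a diagonal matrix, and define R := I − ∇g(∇gᵀ∇g)⁻¹∇gᵀ and P := ∇hᵀR∇h + H². Then the matrix Q := R − R∇h P⁻¹ ∇hᵀ R ∈ ℝ^{n×n} is symmetric positive semidefinite. -/
/-!
`R` is the orthogonal projection onto the orthogonal complement of the columns of `∇g`, so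
`R = Rᵀ R` and, with `B := R ∇h`, we get `P = Bᵀ B + Hᵀ H` and
`Q = Rᵀ R - Rᵀ B P⁻¹ Bᵀ R`. This is the Schur complement of `P` in the Gram matrix
`[R B]ᵀ [R B] + [0 H]ᵀ [0 H]`, hence positive semidefinite. `P` is positive definite because
`B` is injective: `R ∇h x = 0` writes `∇h x` as a combination of the columns of `∇g`, which the
linear independence forbids unless `x = 0`.
-/

open Matrix

namespace Matrix

section Projection

variable {α : Type*} [CommRing α] {n p : Type*} [Fintype n] [Fintype p]

theorem transpose_one_sub_mul_inv_mul_transpose [DecidableEq n] [DecidableEq p]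
    (G : Matrix n p α) :
    (1 - G * (Gᵀ * G)⁻¹ * Gᵀ)ᵀ = 1 - G * (Gᵀ * G)⁻¹ * Gᵀ := by
  rw [transpose_sub, transpose_one, transpose_mul, transpose_mul, transpose_transpose,
    transpose_nonsing_inv, transpose_mul, transpose_transpose, Matrix.mul_assoc]

theorem isIdempotentElem_mul_inv_mul_transpose [DecidableEq p] (G : Matrix n p α)
    (hG : IsUnit (Gᵀ * G).det) : IsIdempotentElem (G * (Gᵀ * G)⁻¹ * Gᵀ) := by
  unfold IsIdempotentElem
  calc G * (Gᵀ * G)⁻¹ * Gᵀ * (G * (Gᵀ * G)⁻¹ * Gᵀ)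
      = G * ((Gᵀ * G)⁻¹ * (Gᵀ * G)) * (Gᵀ * G)⁻¹ * Gᵀ := by
        simp only [Matrix.mul_assoc]
    _ = G * (Gᵀ * G)⁻¹ * Gᵀ := by rw [nonsing_inv_mul _ hG, Matrix.mul_one]

theorem injective_mulVec_one_sub_mul_mul [DecidableEq n] {m : Type*} [Fintype m]
    {K : Matrix n m α} {G : Matrix n p α}
    (hKG : ∀ (w₁ : m → α) (w₂ : p → α), K *ᵥ w₁ + G *ᵥ w₂ = 0 → w₁ = 0 ∧ w₂ = 0)
    (M : Matrix p n α) : Function.Injective ((1 - G * M) * K).mulVec := by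
  refine (injective_iff_map_eq_zero (mulVecLin ((1 - G * M) * K))).mpr fun x hx => ?_
  refine (hKG x (-(M * K) *ᵥ x) ?_).1
  rw [mulVecLin_apply, Matrix.sub_mul, Matrix.one_mul, sub_mulVec, Matrix.mul_assoc] at hx
  rwa [neg_mulVec, mulVec_neg, mulVec_mulVec, ← sub_eq_add_neg]

end Projection

section Schur

variable {K : Type*} [Field K] [PartialOrder K] [StarRing K] [StarOrderedRing K]
  {l m n k : Type*} [Fintype l] [Fintype m] [Fintype n] [Fintype k] [DecidableEq m]

theorem PosDef.posSemidef_gram_sub_schur {X : Matrix l n K} {Y : Matrix l m K}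
    {Z : Matrix k m K} (hP : (Yᴴ * Y + Zᴴ * Z).PosDef) :
    (Xᴴ * X - Xᴴ * Y * (Yᴴ * Y + Zᴴ * Z)⁻¹ * (Xᴴ * Y)ᴴ).PosSemidef := by
  let := hP.isUnit.invertible
  refine (PosDef.fromBlocks₂₂ _ _ hP).mp ?_
  have hgram : fromBlocks (Xᴴ * X) (Xᴴ * Y) (Xᴴ * Y)ᴴ (Yᴴ * Y + Zᴴ * Z)
      = (fromCols X Y)ᴴ * fromCols X Y + (fromCols (0 : Matrix k n K) Z)ᴴ * fromCols 0 Z := by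
    rw [conjTranspose_fromCols_eq_fromRows_conjTranspose, fromRows_mul_fromCols,
      conjTranspose_fromCols_eq_fromRows_conjTranspose, fromRows_mul_fromCols, fromBlocks_add]
    simp
  rw [hgram]
  exact (posSemidef_conjTranspose_mul_self _).add (posSemidef_conjTranspose_mul_self _)

theorem posSemidef_sub_mul_inv_mul_of_isIdempotentElem [DecidableEq n] {R : Matrix n n K}
    (hR : R.IsHermitian) (hRR : IsIdempotentElem R) {B : Matrix n m K}
    (hB : Function.Injective (R * B).mulVec) (Z : Matrix k m K) :
    (R - R * B * (Bᴴ * R * B + Zᴴ * Z)⁻¹ * Bᴴ * R).PosSemidef := by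
  have hRR' : Rᴴ * R = R := by rw [hR.eq, hRR.eq]
  have hBRB : (R * B)ᴴ * (R * B) = Bᴴ * R * B := by
    rw [conjTranspose_mul, Matrix.mul_assoc, ← Matrix.mul_assoc Rᴴ, hRR', Matrix.mul_assoc]
  have hP : ((R * B)ᴴ * (R * B) + Zᴴ * Z).PosDef :=
    (PosDef.conjTranspose_mul_self _ hB).add_posSemidef (posSemidef_conjTranspose_mul_self Z)
  have := hP.posSemidef_gram_sub_schur (X := R)
  rw [hBRB, ← Matrix.mul_assoc, hRR', conjTranspose_mul, hR.eq] at this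
  simpa only [Matrix.mul_assoc] using this

end Schur

end Matrix

theorem stmt8 {n m p : ℕ} (gradh : Matrix (Fin n) (Fin m) ℝ)
    (gradg : Matrix (Fin n) (Fin p) ℝ)
    (H : Matrix (Fin m) (Fin m) ℝ) (hH : H.IsDiag)
    (hli : ∀ (w₁ : Fin m → ℝ) (w₂ : Fin p → ℝ),
      gradh *ᵥ w₁ + gradg *ᵥ w₂ = 0 → w₁ = 0 ∧ w₂ = 0)
    (R : Matrix (Fin n) (Fin n) ℝ)
    (hR : R = 1 - gradg * (gradgᵀ * gradg)⁻¹ * gradgᵀ)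
    (P : Matrix (Fin m) (Fin m) ℝ)
    (hP : P = gradhᵀ * R * gradh + H * H)
    (Q : Matrix (Fin n) (Fin n) ℝ)
    (hQ : Q = R - R * gradh * P⁻¹ * gradhᵀ * R) :
    Q.PosSemidef := by
  have hg : Function.Injective gradg.mulVec :=
    (injective_iff_map_eq_zero (mulVecLin gradg)).mpr fun x hx => (hli 0 x (by simpa using hx)).2
  have hgg : IsUnit (gradgᵀ * gradg).det :=
    (isUnit_iff_isUnit_det _).mp (PosDef.conjTranspose_mul_self gradg hg).isUnit
  have hRherm : R.IsHermitian := isHermitian_iff_isSymm.mpr <| by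
    rw [hR]; exact transpose_one_sub_mul_inv_mul_transpose gradg
  have hRidem : IsIdempotentElem R :=
    hR ▸ (isIdempotentElem_mul_inv_mul_transpose gradg hgg).one_sub
  have hB : Function.Injective (R * gradh).mulVec := by
    rw [hR, Matrix.mul_assoc]; exact injective_mulVec_one_sub_mul_mul hli _
  have hHH : H * H = Hᴴ * H := by
    rw [conjTranspose_eq_transpose_of_trivial, hH.isSymm.eq]
  simpa only [hQ, hP, hHH, conjTranspose_eq_transpose_of_trivial] using
    posSemidef_sub_mul_inv_mul_of_isIdempotentElem hRherm hRidem hB H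
end

section
/- Let ∇h ∈ ℝ^{n×m} and ∇g ∈ ℝ^{n×p} be real matrices such that the columns of the concatenated matrix [∇h, ∇g] are linearly independent, let H ∈ ℝ^{m×m} be a diagonal matrix, and define R := I − ∇g(∇gᵀ∇g)⁻¹∇gᵀ, P := ∇hᵀR∇h + H², Q := R − R∇h P⁻¹ ∇hᵀ R, and Q₁ := R − R∇h(∇hᵀR∇h)⁻¹∇hᵀR. Then Q − Q₁ is symmetric positive semidefinite; i.e., xᵀQx ≥ xᵀQ₁x for every x ∈ ℝ^n. -/
/-!
`R` is the orthogonal projection onto the complement of the column space of `∇g`, so that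
`Q - Q₁ = B (A⁻¹ - P⁻¹) Bᵀ` with `B = R ∇h` and `A = ∇hᵀ R ∇h = Bᵀ B`. Linear independence of
the columns of `[∇h, ∇g]` makes `B` injective, hence `A` positive definite, and `P = A + H²` with
`H² ⪰ 0`. Matrix inversion is antitone on positive definite matrices, so `A⁻¹ - P⁻¹ ⪰ 0`.
-/

open Matrix
open scoped ComplexOrder

namespace Matrix

variable {ι κ ν : Type*} [Fintype κ] [Fintype ν]

lemma injective_mulVec_sub_mul {α : Type*} [Ring α] {F : Matrix ι κ α} {G : Matrix ι ν α}
    (hFG : ∀ w₁ w₂, F *ᵥ w₁ + G *ᵥ w₂ = 0 → w₁ = 0 ∧ w₂ = 0) (M : Matrix ν κ α) :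
    Function.Injective (F - G * M).mulVec := by
  intro v w hvw
  have h : F *ᵥ (v - w) + G *ᵥ (-(M *ᵥ (v - w))) = 0 := by
    rw [mulVec_neg, mulVec_mulVec, ← sub_eq_add_neg, ← sub_mulVec, mulVec_sub, hvw, sub_self]
  exact sub_eq_zero.mp (hFG _ _ h).1

variable {𝕜 : Type*} [RCLike 𝕜] [Fintype ι]

lemma isHermitian_one_sub_mul_inv_mul_conjTranspose [DecidableEq ι] [DecidableEq κ]
    (G : Matrix ι κ 𝕜) : (1 - G * (Gᴴ * G)⁻¹ * Gᴴ).IsHermitian := by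
  have hK : ((Gᴴ * G)⁻¹)ᴴ = (Gᴴ * G)⁻¹ := (isHermitian_conjTranspose_mul_self G).inv
  simp only [IsHermitian, conjTranspose_sub, conjTranspose_one, conjTranspose_mul,
    conjTranspose_conjTranspose, hK, Matrix.mul_assoc]

lemma one_sub_mul_inv_mul_conjTranspose_mul_self [DecidableEq ι] [DecidableEq κ]
    {G : Matrix ι κ 𝕜} (hG : IsUnit (Gᴴ * G).det) :
    (1 - G * (Gᴴ * G)⁻¹ * Gᴴ) * (1 - G * (Gᴴ * G)⁻¹ * Gᴴ) = 1 - G * (Gᴴ * G)⁻¹ * Gᴴ := by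
  have hE : G * (Gᴴ * G)⁻¹ * Gᴴ * (G * (Gᴴ * G)⁻¹ * Gᴴ) = G * (Gᴴ * G)⁻¹ * Gᴴ := by
    simp only [Matrix.mul_assoc]
    rw [← Matrix.mul_assoc Gᴴ G, nonsing_inv_mul_cancel_left _ _ hG]
  rw [sub_mul, mul_sub, mul_sub, hE, one_mul, mul_one, one_mul]
  abel

lemma posDef_conjTranspose_mul_mul_of_mul_self_eq {R : Matrix ι ι 𝕜} (hR : R.IsHermitian)
    (hRR : R * R = R) {F : Matrix ι κ 𝕜} (hF : Function.Injective (R * F).mulVec) :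
    (Fᴴ * R * F).PosDef := by
  have h : (R * F)ᴴ * (R * F) = Fᴴ * R * F := by
    rw [conjTranspose_mul, hR.eq, Matrix.mul_assoc, ← Matrix.mul_assoc R, hRR, Matrix.mul_assoc]
  exact h ▸ PosDef.conjTranspose_mul_self _ hF

lemma PosDef.posSemidef_inv_sub_inv_add [DecidableEq ι] {A S : Matrix ι ι 𝕜} (hA : A.PosDef)
    (hS : S.PosSemidef) : (A⁻¹ - (A + S)⁻¹).PosSemidef := by
  set P := A + S
  have hP : P.PosDef := hA.add_posSemidef hS
  have hAu : IsUnit A.det := (isUnit_iff_isUnit_det A).mp hA.isUnit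
  have hPu : IsUnit P.det := (isUnit_iff_isUnit_det P).mp hP.isUnit
  -- `S + S A⁻¹ S = S A⁻¹ P` and `P⁻¹ S A⁻¹ = P⁻¹ (P - A) A⁻¹ = A⁻¹ - P⁻¹`
  have key : A⁻¹ - P⁻¹ = (P⁻¹)ᴴ * (S + Sᴴ * A⁻¹ * S) * P⁻¹ := by
    rw [hP.isHermitian.inv.eq, hS.isHermitian.eq]
    have hSP : S + S * A⁻¹ * S = S * A⁻¹ * P := by
      rw [Matrix.mul_add, nonsing_inv_mul_cancel_right _ _ hAu]
    have hPS : P⁻¹ * S * A⁻¹ = A⁻¹ - P⁻¹ := by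
      rw [show S = P - A by simp [P], Matrix.mul_sub, Matrix.sub_mul, nonsing_inv_mul _ hPu,
        one_mul, mul_nonsing_inv_cancel_right _ _ hAu]
    rw [hSP, ← hPS, Matrix.mul_assoc, Matrix.mul_assoc, mul_nonsing_inv_cancel_right _ _ hPu]
  rw [key]
  exact (hS.add (hA.inv.posSemidef.conjTranspose_mul_mul_same S)).conjTranspose_mul_mul_same _

lemma PosSemidef.sub_mul_mul_conjTranspose_mul_antitone {R : Matrix ι ι 𝕜}
    (hR : R.IsHermitian) (F : Matrix ι κ 𝕜) {X Y : Matrix κ κ 𝕜} (hXY : (Y - X).PosSemidef) :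
    ((R - R * F * X * Fᴴ * R) - (R - R * F * Y * Fᴴ * R)).PosSemidef := by
  have h : (R - R * F * X * Fᴴ * R) - (R - R * F * Y * Fᴴ * R) = R * F * (Y - X) * (R * F)ᴴ := by
    rw [conjTranspose_mul, hR.eq, Matrix.mul_sub, Matrix.sub_mul]
    simp only [Matrix.mul_assoc]
    abel
  rw [h]
  exact hXY.mul_mul_conjTranspose_same _

end Matrix

theorem stmt10 {n m p : ℕ} (gradh : Matrix (Fin n) (Fin m) ℝ)
    (gradg : Matrix (Fin n) (Fin p) ℝ)
    (H : Matrix (Fin m) (Fin m) ℝ) (hH : H.IsDiag)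
    (hli : ∀ (w₁ : Fin m → ℝ) (w₂ : Fin p → ℝ),
      gradh *ᵥ w₁ + gradg *ᵥ w₂ = 0 → w₁ = 0 ∧ w₂ = 0)
    (R : Matrix (Fin n) (Fin n) ℝ)
    (hR : R = 1 - gradg * (gradgᵀ * gradg)⁻¹ * gradgᵀ)
    (P : Matrix (Fin m) (Fin m) ℝ)
    (hP : P = gradhᵀ * R * gradh + H * H)
    (Q : Matrix (Fin n) (Fin n) ℝ)
    (hQ : Q = R - R * gradh * P⁻¹ * gradhᵀ * R)
    (Q₁ : Matrix (Fin n) (Fin n) ℝ)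
    (hQ₁ : Q₁ = R - R * gradh * (gradhᵀ * R * gradh)⁻¹ * gradhᵀ * R) :
    (Q - Q₁).PosSemidef ∧ ∀ x : Fin n → ℝ, x ⬝ᵥ Q₁ *ᵥ x ≤ x ⬝ᵥ Q *ᵥ x := by
  simp only [← conjTranspose_eq_transpose_of_trivial] at hR hP hQ hQ₁
  have hg : Function.Injective gradg.mulVec := by
    simpa using injective_mulVec_sub_mul (fun w₂ w₁ h ↦ (hli w₁ w₂ (by rwa [add_comm])).symm) 0
  have hG : IsUnit (gradgᴴ * gradg).det :=
    (isUnit_iff_isUnit_det _).mp (PosDef.conjTranspose_mul_self gradg hg).isUnit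
  have hRh : R.IsHermitian := hR ▸ isHermitian_one_sub_mul_inv_mul_conjTranspose gradg
  have hB : Function.Injective (R * gradh).mulVec := by
    rw [hR, Matrix.sub_mul, Matrix.one_mul, Matrix.mul_assoc, Matrix.mul_assoc]
    exact injective_mulVec_sub_mul hli _
  have hA : (gradhᴴ * R * gradh).PosDef := posDef_conjTranspose_mul_mul_of_mul_self_eq hRh
    (hR ▸ one_sub_mul_inv_mul_conjTranspose_mul_self hG) hB
  have hHH : (H * H).PosSemidef := by
    simpa [hH.isSymm.eq] using posSemidef_conjTranspose_mul_self H
  have hQQ₁ : (Q - Q₁).PosSemidef := hQ ▸ hQ₁ ▸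
    PosSemidef.sub_mul_mul_conjTranspose_mul_antitone hRh gradh
      (hP ▸ hA.posSemidef_inv_sub_inv_add hHH)
  refine ⟨hQQ₁, fun x ↦ ?_⟩
  have := hQQ₁.dotProduct_mulVec_nonneg x
  rw [star_trivial, sub_mulVec, dotProduct_sub] at this
  linarith
end

section
/- Fix matrices ∇h ∈ ℝ^{n×m}, ∇g ∈ ℝ^{n×p} such that the columns of [∇h, ∇g] are linearly independent, a diagonal matrix H ∈ ℝ^{m×m}, a vector g ∈ ℝ^p, a matrix M ∈ ℝ^{n'×n} and a vector c ∈ ℝ^n; set F(θ) := Mᵀθ + c for θ ∈ ℝ^{n'}, and define the loss l(θ) := inf{ ‖F(θ) + ∇h λ + ∇g ν‖₂² + ‖Hλ‖₂² + ‖g‖₂² : λ ∈ ℝ^m with λ ≥ 0 componentwise, ν ∈ ℝ^p }. With R := I − ∇g(∇gᵀ∇g)⁻¹∇gᵀ, P := ∇hᵀR∇h + H², and Q := R − R∇h P⁻¹ ∇hᵀ R, one has for every θ ∈ ℝ^{n'}: l(θ) = inf{ (λ + P⁻¹∇hᵀR F(θ))ᵀ P (λ + P⁻¹∇hᵀR F(θ))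 : λ ∈ ℝ^m, λ ≥ 0 componentwise } + F(θ)ᵀ Q F(θ) + ‖g‖₂². -/
/-!
Write `F = Mᵀθ + c` and `K = (∇gᵀ∇g)⁻¹∇gᵀ`. Since `R` is the orthogonal projector onto the
orthogonal complement of the column space of `∇g`, every `v` splits as
`v + ∇g ν = R v + ∇g (ν + K v)` with orthogonal summands, so
`‖v + ∇g ν‖² = vᵀRv + ‖∇g (ν + K v)‖²` and the infimum over `ν` is attained at `ν = -K v`.
For `v = F + ∇h λ`, completing the square in `λ` turns `vᵀRv + ‖Hλ‖²` into
`(λ + P⁻¹∇hᵀRF)ᵀ P (λ + P⁻¹∇hᵀRF) + FᵀQF`, where `P = (R∇h)ᵀ(R∇h) + HᵀH` is positive definite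
(hence invertible) because linear independence of `[∇h, ∇g]` makes `R∇h` injective.
-/

open Matrix

lemma euclNorm_sq {n : ℕ} (v : Fin n → ℝ) : euclNorm v ^ 2 = v ⬝ᵥ v := by
  rw [euclNorm, EuclideanSpace.norm_eq, Real.sq_sqrt (Finset.sum_nonneg fun i _ => sq_nonneg _)]
  simp [dotProduct, sq]

lemma csInf_eq_csInf_add_of_forall_exists_le {S T : Set ℝ} {C : ℝ} (hT : T.Nonempty)
    (hTb : BddBelow T) (hle : ∀ s ∈ S, ∃ t ∈ T, t + C ≤ s) (hmem : ∀ t ∈ T, t + C ∈ S) :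
    sInf S = sInf T + C := by
  have hSb : BddBelow S := ⟨sInf T + C, fun s hs => by
    obtain ⟨t, ht, hts⟩ := hle s hs
    linarith [csInf_le hTb ht]⟩
  obtain ⟨t₀, ht₀⟩ := hT
  apply le_antisymm
  · have : sInf S - C ≤ sInf T :=
      le_csInf ⟨t₀, ht₀⟩ fun t ht => by linarith [csInf_le hSb (hmem t ht)]
    linarith
  · refine le_csInf ⟨t₀ + C, hmem t₀ ht₀⟩ fun s hs => ?_
    obtain ⟨t, ht, hts⟩ := hle s hs
    linarith [csInf_le hTb ht]

namespace Matrix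

lemma injective_mulVec_of_add_mulVec_eq_zero {ι κ μ : Type*} [Fintype κ] [Fintype μ]
    {A : Matrix ι κ ℝ} {B : Matrix ι μ ℝ}
    (hBA : ∀ (w₁ : μ → ℝ) (w₂ : κ → ℝ), B *ᵥ w₁ + A *ᵥ w₂ = 0 → w₁ = 0 ∧ w₂ = 0) :
    Function.Injective A.mulVec := fun u v huv =>
  sub_eq_zero.mp (hBA 0 (u - v) (by rw [mulVec_sub, huv, sub_self, mulVec_zero, add_zero])).2

variable {ι κ μ ρ : Type*} [Fintype ι] [Fintype κ] [Fintype μ] [Fintype ρ]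

lemma dotProduct_mulVec_comm_of_transpose_eq {M : Matrix ι ι ℝ} (hM : Mᵀ = M) (u v : ι → ℝ) :
    u ⬝ᵥ M *ᵥ v = v ⬝ᵥ M *ᵥ u := by
  rw [← dotProduct_transpose_mulVec, hM]

lemma mulVec_dotProduct_mulVec_mulVec (A : Matrix ι μ ℝ) (M : Matrix ι ι ℝ) (x y : μ → ℝ) :
    (A *ᵥ x) ⬝ᵥ M *ᵥ (A *ᵥ y) = x ⬝ᵥ (Aᵀ * M * A) *ᵥ y := by
  rw [← mulVec_mulVec, ← mulVec_mulVec, dotProduct_transpose_mulVec, dotProduct_comm]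

lemma mulVec_dotProduct_mulVec (A : Matrix ι μ ℝ) (x y : μ → ℝ) :
    (A *ᵥ x) ⬝ᵥ (A *ᵥ y) = x ⬝ᵥ (Aᵀ * A) *ᵥ y := by
  rw [← mulVec_mulVec, dotProduct_transpose_mulVec, dotProduct_comm]

lemma add_inv_mulVec_dotProduct_mulVec [DecidableEq μ] {P : Matrix μ μ ℝ} (hPt : Pᵀ = P)
    (hP : IsUnit P.det) (x s : μ → ℝ) :
    (x + P⁻¹ *ᵥ s) ⬝ᵥ P *ᵥ (x + P⁻¹ *ᵥ s) =
      x ⬝ᵥ P *ᵥ x + 2 * (x ⬝ᵥ s) + s ⬝ᵥ P⁻¹ *ᵥ s := by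
  have hPb : P *ᵥ (P⁻¹ *ᵥ s) = s := by rw [mulVec_mulVec, mul_nonsing_inv _ hP, one_mulVec]
  rw [mulVec_add, dotProduct_add, add_dotProduct, add_dotProduct, hPb,
    dotProduct_mulVec_comm_of_transpose_eq hPt (P⁻¹ *ᵥ s) x, hPb, dotProduct_comm (P⁻¹ *ᵥ s) s]
  ring

lemma add_mulVec_quadForm_eq_completedSquare [DecidableEq μ] {R : Matrix ι ι ℝ}
    (hRt : Rᵀ = R) {B : Matrix ι μ ℝ} {H : Matrix ρ μ ℝ} {P : Matrix μ μ ℝ}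
    (hP : P = Bᵀ * R * B + Hᵀ * H) (hPu : IsUnit P.det) (F : ι → ℝ) (x : μ → ℝ) :
    (F + B *ᵥ x) ⬝ᵥ R *ᵥ (F + B *ᵥ x) + (H *ᵥ x) ⬝ᵥ H *ᵥ x =
      (x + P⁻¹ *ᵥ (Bᵀ *ᵥ (R *ᵥ F))) ⬝ᵥ P *ᵥ (x + P⁻¹ *ᵥ (Bᵀ *ᵥ (R *ᵥ F)))
        + F ⬝ᵥ (R - R * B * P⁻¹ * Bᵀ * R) *ᵥ F := by
  have hPt : Pᵀ = P := by
    simp only [hP, transpose_add, transpose_mul, transpose_transpose, hRt, Matrix.mul_assoc]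
  have hcross : (F + B *ᵥ x) ⬝ᵥ R *ᵥ (F + B *ᵥ x) =
      F ⬝ᵥ R *ᵥ F + 2 * (x ⬝ᵥ Bᵀ *ᵥ (R *ᵥ F)) + (B *ᵥ x) ⬝ᵥ R *ᵥ (B *ᵥ x) := by
    rw [mulVec_add, dotProduct_add, add_dotProduct, add_dotProduct,
      dotProduct_mulVec_comm_of_transpose_eq hRt F (B *ᵥ x), dotProduct_transpose_mulVec,
      dotProduct_comm (R *ᵥ F)]
    ring
  have hquad : x ⬝ᵥ P *ᵥ x = (B *ᵥ x) ⬝ᵥ R *ᵥ (B *ᵥ x) + (H *ᵥ x) ⬝ᵥ H *ᵥ x := by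
    rw [mulVec_dotProduct_mulVec_mulVec, mulVec_dotProduct_mulVec, ← dotProduct_add,
      ← add_mulVec, hP]
  have hschur : F ⬝ᵥ (R * B * P⁻¹ * Bᵀ * R) *ᵥ F =
      (Bᵀ *ᵥ (R *ᵥ F)) ⬝ᵥ P⁻¹ *ᵥ (Bᵀ *ᵥ (R *ᵥ F)) := by
    have : R * B * P⁻¹ * Bᵀ * R = (Bᵀ * R)ᵀ * P⁻¹ * (Bᵀ * R) := by
      rw [transpose_mul, transpose_transpose, hRt]
      simp only [Matrix.mul_assoc]
    rw [this, ← mulVec_dotProduct_mulVec_mulVec, ← mulVec_mulVec]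
  rw [add_inv_mulVec_dotProduct_mulVec hPt hPu, sub_mulVec, dotProduct_sub, hschur, hcross,
    hquad]
  ring

lemma dotProduct_self_nonneg (v : ι → ℝ) : 0 ≤ v ⬝ᵥ v := by
  simpa using dotProduct_star_self_nonneg v

lemma isUnit_det_transpose_mul_self [DecidableEq κ] {A : Matrix ι κ ℝ}
    (hA : Function.Injective A.mulVec) : IsUnit (Aᵀ * A).det := by
  rw [← isUnit_iff_isUnit_det]
  simpa [conjTranspose_eq_transpose_of_trivial] using
    (PosDef.conjTranspose_mul_self A hA).isUnit

section rangeComplProj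

variable [DecidableEq ι] [DecidableEq κ] (A : Matrix ι κ ℝ)

/-- The orthogonal projector onto the orthogonal complement of the column space of `A`, when `A`
has full column rank. -/
noncomputable def rangeComplProj : Matrix ι ι ℝ :=
  1 - A * (Aᵀ * A)⁻¹ * Aᵀ

lemma rangeComplProj_transpose : (rangeComplProj A)ᵀ = rangeComplProj A := by
  simp only [rangeComplProj, transpose_sub, transpose_one, transpose_mul, transpose_transpose,
    transpose_nonsing_inv, Matrix.mul_assoc]

variable {A}

lemma transpose_mul_rangeComplProj (hA : Function.Injective A.mulVec) :
    Aᵀ * rangeComplProj A = 0 := by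
  rw [rangeComplProj, Matrix.mul_sub, Matrix.mul_one, ← Matrix.mul_assoc, ← Matrix.mul_assoc,
    mul_nonsing_inv _ (isUnit_det_transpose_mul_self hA), Matrix.one_mul, sub_self]

lemma rangeComplProj_mul (hA : Function.Injective A.mulVec) : rangeComplProj A * A = 0 := by
  simpa [rangeComplProj_transpose] using congrArg transpose (transpose_mul_rangeComplProj hA)

lemma rangeComplProj_mul_self (hA : Function.Injective A.mulVec) :
    rangeComplProj A * rangeComplProj A = rangeComplProj A := by
  conv_lhs => enter [2]; rw [rangeComplProj]
  rw [Matrix.mul_sub, Matrix.mul_one, ← Matrix.mul_assoc, ← Matrix.mul_assoc,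
    rangeComplProj_mul hA, Matrix.zero_mul, Matrix.zero_mul, sub_zero]

variable (A)

lemma add_mulVec_eq_rangeComplProj_mulVec_add (v : ι → ℝ) (w : κ → ℝ) :
    v + A *ᵥ w = rangeComplProj A *ᵥ v + A *ᵥ (w + ((Aᵀ * A)⁻¹ * Aᵀ) *ᵥ v) := by
  rw [rangeComplProj, sub_mulVec, one_mulVec, mulVec_add, mulVec_mulVec, ← Matrix.mul_assoc]
  abel

variable {A}

lemma add_mulVec_dotProduct_self (hA : Function.Injective A.mulVec) (v : ι → ℝ) (w : κ → ℝ) :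
    (v + A *ᵥ w) ⬝ᵥ (v + A *ᵥ w) = v ⬝ᵥ rangeComplProj A *ᵥ v
      + (A *ᵥ (w + ((Aᵀ * A)⁻¹ * Aᵀ) *ᵥ v)) ⬝ᵥ (A *ᵥ (w + ((Aᵀ * A)⁻¹ * Aᵀ) *ᵥ v)) := by
  set u := w + ((Aᵀ * A)⁻¹ * Aᵀ) *ᵥ v
  have horth : (rangeComplProj A *ᵥ v) ⬝ᵥ (A *ᵥ u) = 0 := by
    rw [← dotProduct_transpose_mulVec, dotProduct_comm, mulVec_mulVec,
      transpose_mul_rangeComplProj hA, zero_mulVec, zero_dotProduct]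
  have hproj :
      (rangeComplProj A *ᵥ v) ⬝ᵥ (rangeComplProj A *ᵥ v) = v ⬝ᵥ rangeComplProj A *ᵥ v := by
    rw [mulVec_dotProduct_mulVec, rangeComplProj_transpose, rangeComplProj_mul_self hA]
  rw [add_mulVec_eq_rangeComplProj_mulVec_add A v w, add_dotProduct, dotProduct_add,
    dotProduct_add, horth, dotProduct_comm (A *ᵥ u), horth, hproj]
  ring

lemma posDef_transpose_mul_rangeComplProj_mul_add {B : Matrix ι μ ℝ}
    (hBA : ∀ (w₁ : μ → ℝ) (w₂ : κ → ℝ), B *ᵥ w₁ + A *ᵥ w₂ = 0 → w₁ = 0 ∧ w₂ = 0)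
    (H : Matrix ρ μ ℝ) : (Bᵀ * rangeComplProj A * B + Hᵀ * H).PosDef := by
  have hA := injective_mulVec_of_add_mulVec_eq_zero hBA
  have hRB : Function.Injective (rangeComplProj A * B).mulVec := fun x y hxy => by
    refine sub_eq_zero.mp (hBA (x - y) (-(((Aᵀ * A)⁻¹ * Aᵀ) *ᵥ (B *ᵥ (x - y)))) ?_).1
    rw [add_mulVec_eq_rangeComplProj_mulVec_add, neg_add_cancel, mulVec_zero, add_zero,
      mulVec_mulVec, mulVec_sub, hxy, sub_self]
  have hsq : (rangeComplProj A * B)ᵀ * (rangeComplProj A * B) = Bᵀ * rangeComplProj A * B := by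
    rw [transpose_mul, rangeComplProj_transpose, Matrix.mul_assoc, ← Matrix.mul_assoc _ _ B,
      rangeComplProj_mul_self hA, Matrix.mul_assoc]
  rw [← hsq]
  simpa only [conjTranspose_eq_transpose_of_trivial] using
    (PosDef.conjTranspose_mul_self _ hRB).add_posSemidef (posSemidef_conjTranspose_mul_self H)

end rangeComplProj

end Matrix

theorem stmt13 {n m p n' : ℕ} (gradh : Matrix (Fin n) (Fin m) ℝ)
    (gradg : Matrix (Fin n) (Fin p) ℝ)
    (H : Matrix (Fin m) (Fin m) ℝ) (hH : H.IsDiag)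
    (hli : ∀ (w₁ : Fin m → ℝ) (w₂ : Fin p → ℝ),
      gradh *ᵥ w₁ + gradg *ᵥ w₂ = 0 → w₁ = 0 ∧ w₂ = 0)
    (g : Fin p → ℝ) (M : Matrix (Fin n') (Fin n) ℝ) (c : Fin n → ℝ)
    (R : Matrix (Fin n) (Fin n) ℝ)
    (hR : R = 1 - gradg * (gradgᵀ * gradg)⁻¹ * gradgᵀ)
    (P : Matrix (Fin m) (Fin m) ℝ)
    (hP : P = gradhᵀ * R * gradh + H * H)
    (Q : Matrix (Fin n) (Fin n) ℝ)
    (hQ : Q = R - R * gradh * P⁻¹ * gradhᵀ * R) :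
    ∀ θ : Fin n' → ℝ,
      sInf {t : ℝ | ∃ (lam : Fin m → ℝ) (ν : Fin p → ℝ), (∀ i, 0 ≤ lam i) ∧
          t = euclNorm ((Mᵀ *ᵥ θ + c) + gradh *ᵥ lam + gradg *ᵥ ν) ^ 2
              + euclNorm (H *ᵥ lam) ^ 2 + euclNorm g ^ 2} =
        sInf {t : ℝ | ∃ lam : Fin m → ℝ, (∀ i, 0 ≤ lam i) ∧
            t = (lam + P⁻¹ *ᵥ (gradhᵀ *ᵥ (R *ᵥ (Mᵀ *ᵥ θ + c)))) ⬝ᵥ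
                P *ᵥ (lam + P⁻¹ *ᵥ (gradhᵀ *ᵥ (R *ᵥ (Mᵀ *ᵥ θ + c))))}
          + (Mᵀ *ᵥ θ + c) ⬝ᵥ Q *ᵥ (Mᵀ *ᵥ θ + c) + euclNorm g ^ 2 := by
  intro θ
  have hA := injective_mulVec_of_add_mulVec_eq_zero hli
  nth_rewrite 1 [← hH.isSymm.eq] at hP
  rw [← rangeComplProj] at hR
  subst hR
  have hPd : P.PosDef := hP ▸ posDef_transpose_mul_rangeComplProj_mul_add hli H
  set F := Mᵀ *ᵥ θ + c
  set b := P⁻¹ *ᵥ (gradhᵀ *ᵥ (rangeComplProj gradg *ᵥ F))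
  set K := (gradgᵀ * gradg)⁻¹ * gradgᵀ
  have key : ∀ lam ν,
      euclNorm (F + gradh *ᵥ lam + gradg *ᵥ ν) ^ 2 + euclNorm (H *ᵥ lam) ^ 2 =
        (lam + b) ⬝ᵥ P *ᵥ (lam + b) + F ⬝ᵥ Q *ᵥ F
          + (gradg *ᵥ (ν + K *ᵥ (F + gradh *ᵥ lam))) ⬝ᵥ (gradg *ᵥ (ν + K *ᵥ (F + gradh *ᵥ lam))) :=
    fun lam ν => by
      rw [euclNorm_sq, euclNorm_sq, add_mulVec_dotProduct_self hA, add_right_comm,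
        add_mulVec_quadForm_eq_completedSquare (rangeComplProj_transpose gradg) hP
          ((isUnit_iff_isUnit_det _).mp hPd.isUnit), hQ]
  rw [add_assoc]
  refine csInf_eq_csInf_add_of_forall_exists_le ⟨_, 0, fun _ => le_rfl, rfl⟩ ⟨0, ?_⟩ ?_ ?_
  · rintro _ ⟨lam, -, rfl⟩
    simpa using hPd.posSemidef.dotProduct_mulVec_nonneg (lam + b)
  · rintro _ ⟨lam, ν, hlam, rfl⟩
    refine ⟨_, ⟨lam, hlam, rfl⟩, ?_⟩
    linarith [key lam ν, dotProduct_self_nonneg (gradg *ᵥ (ν + K *ᵥ (F + gradh *ᵥ lam)))]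
  · rintro _ ⟨lam, hlam, rfl⟩
    refine ⟨lam, -(K *ᵥ (F + gradh *ᵥ lam)), hlam, ?_⟩
    have := key lam (-(K *ᵥ (F + gradh *ᵥ lam)))
    rw [neg_add_cancel, mulVec_zero, dotProduct_zero, add_zero] at this
    linarith
end

section
/- Let f : ℝ^d → ℝ be a convex function that is C-Lipschitz with respect to the Euclidean norm (C ≥ 0), let Θ ⊆ ℝ^d be a nonempty closed convex set, let μ > 0, let θ₀ ∈ ℝ^d, and let θ* ∈ Θ. Suppose θ̃ ∈ ℝ^d minimizes the map θ ↦ (1/2)‖θ − θ₀‖₂² + μ·f(θ) over ℝ^d, and θ₊ is the Euclidean projection of θ̃ onto Θ (i.e., θ₊ ∈ Θ and ‖θ₊ − θ̃‖₂ ≤ ‖θ − θ̃‖₂ for all θ ∈ Θ). Then μ·(f(θ₀) − f(θ*)) ≤ C²μ²/2 + (1/2)‖θ₀ − θ*‖₂² − (1/2)‖θ₊ − θ*‖₂². -/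
/-!
Both the proximal point `θtilde` and the projection `θplus` minimise a `1`-strongly convex function
(`½‖· - θ₀‖² + μ f` on the whole space, resp. `½‖· - θtilde‖²` on `Θ`), and a strongly convex
function grows at least quadratically away from its minimiser. Comparing each minimiser with
`θstar` gives the prox three-point inequality and `‖θplus - θstar‖ ≤ ‖θstar - θtilde‖`; the
Lipschitz bound `μ (f θ₀ - f θtilde) ≤ ½‖θtilde - θ₀‖² + C²μ²/2` (AM-GM) closes the chain.
-/

open Filter Topology

section StrongConvexity

variable {E : Type*} [NormedAddCommGroup E]

lemma StrongConvexOn.add_convexOn [NormedSpace ℝ E] {s : Set E} {m : ℝ} {f g : E → ℝ}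
    (hf : StrongConvexOn s m f) (hg : ConvexOn ℝ s g) : StrongConvexOn s m (f + g) := by
  simpa only [StrongConvexOn, add_zero] using hf.add (uniformConvexOn_zero.2 hg)

lemma StrongConvexOn.apply_add_sq_norm_sub_le_of_isMinOn [NormedSpace ℝ E] {s : Set E} {m : ℝ}
    {f : E → ℝ} {x y : E} (hf : StrongConvexOn s m f) (hx : IsMinOn f s x) (hxs : x ∈ s)
    (hy : y ∈ s) : f x + m / 2 * ‖x - y‖ ^ 2 ≤ f y := by
  set M := m / 2 * ‖x - y‖ ^ 2
  have hsegment : ∀ t ∈ Set.Ioo (0 : ℝ) 1, f x + (1 - t) * M ≤ f y := by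
    rintro t ⟨ht0, ht1⟩
    have hmin : f x ≤ f ((1 - t) • x + t • y) :=
      isMinOn_iff.1 hx _ (hf.1 hxs hy (by linarith) ht0.le (by ring))
    have hconv : f ((1 - t) • x + t • y) ≤ (1 - t) * f x + t * f y - (1 - t) * t * M :=
      hf.2 hxs hy (by linarith) ht0.le (by ring)
    have hscaled : t * (f x + (1 - t) * M) ≤ t * f y := by nlinarith
    exact le_of_mul_le_mul_left hscaled ht0
  have hlim : Tendsto (fun t : ℝ => f x + (1 - t) * M) (𝓝[>] 0) (𝓝 (f x + M)) := by
    have hcont : Continuous fun t : ℝ => f x + (1 - t) * M := by fun_prop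
    simpa using (hcont.tendsto 0).mono_left nhdsWithin_le_nhds
  exact le_of_tendsto hlim (eventually_of_mem (Ioo_mem_nhdsGT one_pos) hsegment)

variable [InnerProductSpace ℝ E]

lemma strongConvexOn_half_sq_norm_sub {s : Set E} (hs : Convex ℝ s) (x₀ : E) :
    StrongConvexOn s 1 fun x => 1 / 2 * ‖x - x₀‖ ^ 2 := by
  refine ⟨hs, fun x _ y _ a b ha hb hab => le_of_eq ?_⟩
  obtain rfl : b = 1 - a := by linarith
  have hcomb : a • x + (1 - a) • y - x₀ = a • (x - x₀) + (1 - a) • (y - x₀) := by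
    simp only [smul_sub, sub_smul, one_smul]; abel
  have hdiff : x - y = (x - x₀) - (y - x₀) := by abel
  dsimp only
  rw [hcomb, hdiff]
  generalize x - x₀ = u
  generalize y - x₀ = v
  rw [norm_add_sq_real, norm_sub_sq_real, norm_smul, norm_smul,
    real_inner_smul_left, real_inner_smul_right, Real.norm_of_nonneg ha,
    Real.norm_of_nonneg hb, smul_eq_mul, smul_eq_mul]
  ring

end StrongConvexity

theorem stmt16_general {d : ℕ} (f : EuclideanSpace ℝ (Fin d) → ℝ) (C : ℝ)
    (hconv : ConvexOn ℝ Set.univ f)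
    (hlip : ∀ x y : EuclideanSpace ℝ (Fin d), |f x - f y| ≤ C * ‖x - y‖)
    (Θ : Set (EuclideanSpace ℝ (Fin d)))
    (hcv : Convex ℝ Θ)
    (μ : ℝ) (hμ : 0 < μ) (θ₀ : EuclideanSpace ℝ (Fin d))
    (θstar : EuclideanSpace ℝ (Fin d)) (hθstar : θstar ∈ Θ)
    (θtilde : EuclideanSpace ℝ (Fin d))
    (hθtilde : ∀ θ : EuclideanSpace ℝ (Fin d),
      (1 / 2) * ‖θtilde - θ₀‖ ^ 2 + μ * f θtilde ≤ (1 / 2) * ‖θ - θ₀‖ ^ 2 + μ * f θ)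
    (θplus : EuclideanSpace ℝ (Fin d)) (hθplusΘ : θplus ∈ Θ)
    (hθplus : ∀ θ ∈ Θ, ‖θplus - θtilde‖ ≤ ‖θ - θtilde‖) :
    μ * (f θ₀ - f θstar) ≤
      C ^ 2 * μ ^ 2 / 2 + (1 / 2) * ‖θ₀ - θstar‖ ^ 2 - (1 / 2) * ‖θplus - θstar‖ ^ 2 := by
  have hprox : 1 / 2 * ‖θtilde - θ₀‖ ^ 2 + μ * f θtilde + 1 / 2 * ‖θtilde - θstar‖ ^ 2 ≤
      1 / 2 * ‖θstar - θ₀‖ ^ 2 + μ * f θstar := by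
    simpa using ((strongConvexOn_half_sq_norm_sub convex_univ θ₀).add_convexOn
      (hconv.smul hμ.le)).apply_add_sq_norm_sub_le_of_isMinOn
      (isMinOn_iff.2 fun θ _ => hθtilde θ) (Set.mem_univ _) (Set.mem_univ θstar)
  have hproj : 1 / 2 * ‖θplus - θtilde‖ ^ 2 + 1 / 2 * ‖θplus - θstar‖ ^ 2 ≤
      1 / 2 * ‖θstar - θtilde‖ ^ 2 := by
    simpa using (strongConvexOn_half_sq_norm_sub hcv θtilde).apply_add_sq_norm_sub_le_of_isMinOn
      (isMinOn_iff.2 fun θ hθ => by gcongr; exact hθplus θ hθ) hθplusΘ hθstar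
  have hdecrease : μ * (f θ₀ - f θtilde) ≤ 1 / 2 * ‖θtilde - θ₀‖ ^ 2 + C ^ 2 * μ ^ 2 / 2 := by
    have h := (le_abs_self _).trans (hlip θ₀ θtilde)
    rw [norm_sub_rev] at h
    nlinarith [sq_nonneg (C * μ - ‖θtilde - θ₀‖)]
  rw [norm_sub_rev θ₀, norm_sub_rev θtilde θstar] at *
  linarith [sq_nonneg ‖θplus - θtilde‖]

theorem stmt16 {d : ℕ} (f : EuclideanSpace ℝ (Fin d) → ℝ) (C : ℝ) (hC : 0 ≤ C)
    (hconv : ConvexOn ℝ Set.univ f)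
    (hlip : ∀ x y : EuclideanSpace ℝ (Fin d), |f x - f y| ≤ C * ‖x - y‖)
    (Θ : Set (EuclideanSpace ℝ (Fin d))) (hne : Θ.Nonempty) (hcl : IsClosed Θ)
    (hcv : Convex ℝ Θ)
    (μ : ℝ) (hμ : 0 < μ) (θ₀ : EuclideanSpace ℝ (Fin d))
    (θstar : EuclideanSpace ℝ (Fin d)) (hθstar : θstar ∈ Θ)
    (θtilde : EuclideanSpace ℝ (Fin d))
    (hθtilde : ∀ θ : EuclideanSpace ℝ (Fin d),
      (1 / 2) * ‖θtilde - θ₀‖ ^ 2 + μ * f θtilde ≤ (1 / 2) * ‖θ - θ₀‖ ^ 2 + μ * f θ)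
    (θplus : EuclideanSpace ℝ (Fin d)) (hθplusΘ : θplus ∈ Θ)
    (hθplus : ∀ θ ∈ Θ, ‖θplus - θtilde‖ ≤ ‖θ - θtilde‖) :
    μ * (f θ₀ - f θstar) ≤
      C ^ 2 * μ ^ 2 / 2 + (1 / 2) * ‖θ₀ - θstar‖ ^ 2 - (1 / 2) * ‖θplus - θstar‖ ^ 2 :=
  stmt16_general f C hconv hlip Θ hcv μ hμ θ₀ θstar hθstar θtilde hθtilde θplus hθplusΘ hθplus
end

section
/- Let Θ ⊆ ℝ^d be a nonempty closed convex set with ‖θ‖₂ ≤ B₁ for all θ ∈ Θ, where B₁ > 0. Let K ≥ 1 be a natural number and for each k ∈ {1, …, K} let l_k : ℝ^d → ℝ be a convex C-Lipschitz function (C ≥ 0). Let μ₁ > 0 and set μ_k := μ₁/√k. Let θ¹ ∈ Θ, and for k = 1, …, K define θ̃^{k+1} to be a minimizer over ℝ^d of θ ↦ (1/2)‖θ − θ^k‖₂² + μ_k·l_k(θ), and θ^{k+1} to be the Euclidean projection of θ̃^{k+1} onto Θ. Then for every θ* ∈ Θ: ∑_{k=1}^{K} l_k(θ^k) − ∑_{k=1}^{K}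 l_k(θ*) ≤ (2B₁²/μ₁ + μ₁C²)·√K. In particular, the regret of this online algorithm is O(√K). -/
/-!
The proximal step and the projection both minimise a 1-strongly convex objective
`‖y - x‖² / 2 + g y` over a convex set, so their outputs satisfy the three-point inequality
`‖q - x‖² / 2 + g q + ‖s - q‖² / 2 ≤ ‖s - x‖² / 2 + g s`. Together with the Lipschitz bound and
AM–GM this gives the one-step bound
`l_k(θᵏ) - l_k(θ*) ≤ (‖θᵏ - θ*‖² - ‖θᵏ⁺¹ - θ*‖²) / (2 μ_k) + μ_k C² / 2`.
Since `1 / μ_k` increases and all distances are at most `2 B₁`, Abel summation bounds the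
telescoping part by `2 B₁² √K / μ₁`, and `∑ 1 / √k ≤ 2 √K` bounds the rest.
-/

open Finset Filter Topology RealInnerProductSpace

section ThreePoint

variable {E : Type*} [NormedAddCommGroup E] [InnerProductSpace ℝ E]

theorem IsMinOn.three_point {S : Set E} {g : E → ℝ} (hS : Convex ℝ S) (hg : ConvexOn ℝ S g)
    {x q s : E} (hq : IsMinOn (fun y => ‖y - x‖ ^ 2 / 2 + g y) S q) (hqS : q ∈ S) (hs : s ∈ S) :
    ‖q - x‖ ^ 2 / 2 + g q + ‖s - q‖ ^ 2 / 2 ≤ ‖s - x‖ ^ 2 / 2 + g s := by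
  set A := ⟪q - x, s - q⟫ + (g s - g q)
  have hsegment : ∀ t ∈ Set.Ioc (0 : ℝ) 1, 0 ≤ A + t * (‖s - q‖ ^ 2 / 2) := by
    rintro t ⟨ht0, ht1⟩
    have hmin := isMinOn_iff.1 hq _
      (hS hqS hs (a := 1 - t) (b := t) (by linarith) ht0.le (by ring))
    have hconv := hg.2 hqS hs (by linarith : 0 ≤ 1 - t) ht0.le (by ring)
    have hnorm : ‖(1 - t) • q + t • s - x‖ ^ 2
        = ‖q - x‖ ^ 2 + 2 * (t * ⟪q - x, s - q⟫) + t ^ 2 * ‖s - q‖ ^ 2 := by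
      rw [show (1 - t) • q + t • s - x = (q - x) + t • (s - q) by module, norm_add_sq_real,
        real_inner_smul_right, norm_smul, Real.norm_eq_abs, mul_pow, sq_abs]
    simp only [smul_eq_mul] at hmin hconv
    refine nonneg_of_mul_nonneg_right ?_ ht0
    simp only [A]
    linarith
  have hA : 0 ≤ A := by
    refine ge_of_tendsto ?_ (eventually_of_mem (Ioc_mem_nhdsGT one_pos) hsegment)
    have : Continuous fun t : ℝ => A + t * (‖s - q‖ ^ 2 / 2) := by fun_prop
    simpa using this.continuousWithinAt.tendsto (x := 0) (s := Set.Ioi 0)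
  have hexpand : ‖s - x‖ ^ 2 = ‖q - x‖ ^ 2 + 2 * ⟪q - x, s - q⟫ + ‖s - q‖ ^ 2 := by
    rw [← norm_add_sq_real, sub_add_sub_cancel']
  linarith

theorem projected_prox_step_sub_le {S : Set E} (hS : Convex ℝ S) {f : E → ℝ}
    (hf : ConvexOn ℝ Set.univ f) {C : ℝ} (hf_lip : ∀ x y, |f x - f y| ≤ C * ‖x - y‖)
    {μ : ℝ} (hμ : 0 < μ) {x q p s : E}
    (hq : ∀ y, ‖q - x‖ ^ 2 / 2 + μ * f q ≤ ‖y - x‖ ^ 2 / 2 + μ * f y)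
    (hpS : p ∈ S) (hp : ∀ y ∈ S, ‖p - q‖ ≤ ‖y - q‖) (hs : s ∈ S) :
    f x - f s ≤ (‖x - s‖ ^ 2 - ‖p - s‖ ^ 2) / (2 * μ) + μ * C ^ 2 / 2 := by
  have hprox := IsMinOn.three_point convex_univ (hf.smul hμ.le)
    (isMinOn_iff.2 fun y _ => hq y) (Set.mem_univ q) (Set.mem_univ s)
  have hproj := IsMinOn.three_point (g := fun _ => 0) hS (convexOn_const 0 hS)
    (isMinOn_iff.2 fun y hy => by gcongr; exact hp y hy) hpS hs
  have hlip : f x - f q ≤ C * ‖q - x‖ := by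
    rw [norm_sub_rev]; exact (le_abs_self _).trans (hf_lip x q)
  have hamgm : μ * C * ‖q - x‖ ≤ μ ^ 2 * C ^ 2 / 2 + ‖q - x‖ ^ 2 / 2 := by
    nlinarith [sq_nonneg (μ * C - ‖q - x‖)]
  have key : μ * (f x - f s) ≤ (‖s - x‖ ^ 2 - ‖s - p‖ ^ 2) / 2 + μ ^ 2 * C ^ 2 / 2 := by
    simp only [smul_eq_mul] at hprox hproj
    nlinarith [mul_le_mul_of_nonneg_left hlip hμ.le]
  rw [norm_sub_rev x s, norm_sub_rev p s]
  calc f x - f s ≤ ((‖s - x‖ ^ 2 - ‖s - p‖ ^ 2) / 2 + μ ^ 2 * C ^ 2 / 2) / μ := by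
        rw [le_div_iff₀ hμ]; linarith
    _ = (‖s - x‖ ^ 2 - ‖s - p‖ ^ 2) / (2 * μ) + μ * C ^ 2 / 2 := by field_simp

end ThreePoint

theorem sum_Icc_mul_sub_succ_le {η a : ℕ → ℝ} (hη : Monotone η) (hη₀ : 0 ≤ η 0) {M : ℝ} :
    ∀ K : ℕ, (∀ k, 1 ≤ k → k ≤ K + 1 → a k ≤ M) →
      ∑ k ∈ Icc 1 K, η k * (a k - a (k + 1)) ≤ η K * (M - a (K + 1))
  | 0, ha => by simpa using mul_nonneg hη₀ (sub_nonneg.2 (ha 1 le_rfl le_rfl))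
  | K + 1, ha => by
    have ih := sum_Icc_mul_sub_succ_le hη hη₀ K fun k hk hkK => ha k hk (by omega)
    have hgap : 0 ≤ M - a (K + 1) := sub_nonneg.2 (ha (K + 1) (by omega) (by omega))
    rw [sum_Icc_succ_top (by omega)]
    nlinarith [mul_le_mul_of_nonneg_right (hη (Nat.le_succ K)) hgap]

theorem sum_Icc_one_div_sqrt_le : ∀ K : ℕ, ∑ k ∈ Icc 1 K, 1 / Real.sqrt k ≤ 2 * Real.sqrt K
  | 0 => by simp
  | K + 1 => by
    have ih := sum_Icc_one_div_sqrt_le K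
    have hpos : 0 < Real.sqrt (K + 1) := Real.sqrt_pos.2 (by positivity)
    have hmono : Real.sqrt K ≤ Real.sqrt (K + 1) := Real.sqrt_le_sqrt (by linarith)
    have hsq : Real.sqrt (K + 1) ^ 2 - Real.sqrt K ^ 2 = 1 := by
      rw [Real.sq_sqrt (by positivity), Real.sq_sqrt (by positivity)]; ring
    have hstep : 1 / Real.sqrt (K + 1) ≤ 2 * Real.sqrt (K + 1) - 2 * Real.sqrt K := by
      rw [div_le_iff₀ hpos]; nlinarith
    rw [sum_Icc_succ_top (by omega)]
    push_cast
    linarith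

theorem stmt18_general {d : ℕ} (Θ : Set (EuclideanSpace ℝ (Fin d)))
    (hcv : Convex ℝ Θ)
    (B₁ : ℝ) (hbound : ∀ θ ∈ Θ, ‖θ‖ ≤ B₁)
    (K : ℕ)
    (l : ℕ → EuclideanSpace ℝ (Fin d) → ℝ) (C : ℝ)
    (hconv : ∀ k : ℕ, 1 ≤ k → k ≤ K → ConvexOn ℝ Set.univ (l k))
    (hlip : ∀ k : ℕ, 1 ≤ k → k ≤ K →
      ∀ x y : EuclideanSpace ℝ (Fin d), |l k x - l k y| ≤ C * ‖x - y‖)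
    (μ₁ : ℝ) (hμ₁ : 0 < μ₁)
    (θ θtilde : ℕ → EuclideanSpace ℝ (Fin d))
    (hθ1 : θ 1 ∈ Θ)
    (hmin : ∀ k : ℕ, 1 ≤ k → k ≤ K → ∀ y : EuclideanSpace ℝ (Fin d),
      (1 / 2) * ‖θtilde (k + 1) - θ k‖ ^ 2 + (μ₁ / Real.sqrt k) * l k (θtilde (k + 1)) ≤
        (1 / 2) * ‖y - θ k‖ ^ 2 + (μ₁ / Real.sqrt k) * l k y)
    (hprojmem : ∀ k : ℕ, 1 ≤ k → k ≤ K → θ (k + 1) ∈ Θ)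
    (hproj : ∀ k : ℕ, 1 ≤ k → k ≤ K → ∀ y ∈ Θ,
      ‖θ (k + 1) - θtilde (k + 1)‖ ≤ ‖y - θtilde (k + 1)‖)
    (θstar : EuclideanSpace ℝ (Fin d)) (hθstar : θstar ∈ Θ) :
    ∑ k ∈ Finset.Icc 1 K, l k (θ k) - ∑ k ∈ Finset.Icc 1 K, l k θstar ≤
      (2 * B₁ ^ 2 / μ₁ + μ₁ * C ^ 2) * Real.sqrt K := by
  have hmem : ∀ k, 1 ≤ k → k ≤ K + 1 → θ k ∈ Θ := by
    rintro (_ | _ | k) h1 h2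
    · omega
    · exact hθ1
    · exact hprojmem (k + 1) (by omega) (by omega)
  have hdist : ∀ k, 1 ≤ k → k ≤ K + 1 → ‖θ k - θstar‖ ^ 2 ≤ (2 * B₁) ^ 2 := by
    intro k h1 h2
    have := hbound _ (hmem k h1 h2)
    have := hbound _ hθstar
    exact pow_le_pow_left₀ (norm_nonneg _) ((norm_sub_le _ _).trans (by linarith)) 2
  have hstep : ∀ k ∈ Icc 1 K, l k (θ k) - l k θstar ≤
      Real.sqrt k / (2 * μ₁) * (‖θ k - θstar‖ ^ 2 - ‖θ (k + 1) - θstar‖ ^ 2)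
        + μ₁ * C ^ 2 / 2 * (1 / Real.sqrt k) := by
    intro k hk
    obtain ⟨hk1, hkK⟩ := mem_Icc.1 hk
    have hsqrt : 0 < Real.sqrt k := Real.sqrt_pos.2 (by exact_mod_cast hk1)
    have h := projected_prox_step_sub_le (x := θ k) hcv (hconv k hk1 hkK) (hlip k hk1 hkK)
      (div_pos hμ₁ hsqrt) (fun y => by linarith [hmin k hk1 hkK y]) (hprojmem k hk1 hkK)
      (hproj k hk1 hkK) hθstar
    convert h using 2 <;> field_simp
  have hη : Monotone fun k : ℕ => Real.sqrt k / (2 * μ₁) := fun i j hij => by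
    dsimp only; gcongr
  calc ∑ k ∈ Icc 1 K, l k (θ k) - ∑ k ∈ Icc 1 K, l k θstar
      = ∑ k ∈ Icc 1 K, (l k (θ k) - l k θstar) := (sum_sub_distrib _ _).symm
    _ ≤ ∑ k ∈ Icc 1 K, (Real.sqrt k / (2 * μ₁) * (‖θ k - θstar‖ ^ 2 - ‖θ (k + 1) - θstar‖ ^ 2)
        + μ₁ * C ^ 2 / 2 * (1 / Real.sqrt k)) := sum_le_sum hstep
    _ = ∑ k ∈ Icc 1 K, Real.sqrt k / (2 * μ₁) * (‖θ k - θstar‖ ^ 2 - ‖θ (k + 1) - θstar‖ ^ 2)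
        + μ₁ * C ^ 2 / 2 * ∑ k ∈ Icc 1 K, 1 / Real.sqrt k := by rw [sum_add_distrib, mul_sum]
    _ ≤ Real.sqrt K / (2 * μ₁) * ((2 * B₁) ^ 2 - ‖θ (K + 1) - θstar‖ ^ 2)
        + μ₁ * C ^ 2 / 2 * (2 * Real.sqrt K) := by
      gcongr
      · exact sum_Icc_mul_sub_succ_le hη (by simp) K hdist
      · exact sum_Icc_one_div_sqrt_le K
    _ = (2 * B₁ ^ 2 / μ₁ + μ₁ * C ^ 2) * Real.sqrt K
        - Real.sqrt K / (2 * μ₁) * ‖θ (K + 1) - θstar‖ ^ 2 := by ring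
    _ ≤ (2 * B₁ ^ 2 / μ₁ + μ₁ * C ^ 2) * Real.sqrt K := sub_le_self _ (by positivity)

theorem stmt18 {d : ℕ} (Θ : Set (EuclideanSpace ℝ (Fin d))) (hne : Θ.Nonempty)
    (hcl : IsClosed Θ) (hcv : Convex ℝ Θ)
    (B₁ : ℝ) (hB₁ : 0 < B₁) (hbound : ∀ θ ∈ Θ, ‖θ‖ ≤ B₁)
    (K : ℕ) (hK : 1 ≤ K)
    (l : ℕ → EuclideanSpace ℝ (Fin d) → ℝ) (C : ℝ) (hC : 0 ≤ C)
    (hconv : ∀ k : ℕ, 1 ≤ k → k ≤ K → ConvexOn ℝ Set.univ (l k))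
    (hlip : ∀ k : ℕ, 1 ≤ k → k ≤ K →
      ∀ x y : EuclideanSpace ℝ (Fin d), |l k x - l k y| ≤ C * ‖x - y‖)
    (μ₁ : ℝ) (hμ₁ : 0 < μ₁)
    (θ θtilde : ℕ → EuclideanSpace ℝ (Fin d))
    (hθ1 : θ 1 ∈ Θ)
    (hmin : ∀ k : ℕ, 1 ≤ k → k ≤ K → ∀ y : EuclideanSpace ℝ (Fin d),
      (1 / 2) * ‖θtilde (k + 1) - θ k‖ ^ 2 + (μ₁ / Real.sqrt k) * l k (θtilde (k + 1)) ≤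
        (1 / 2) * ‖y - θ k‖ ^ 2 + (μ₁ / Real.sqrt k) * l k y)
    (hprojmem : ∀ k : ℕ, 1 ≤ k → k ≤ K → θ (k + 1) ∈ Θ)
    (hproj : ∀ k : ℕ, 1 ≤ k → k ≤ K → ∀ y ∈ Θ,
      ‖θ (k + 1) - θtilde (k + 1)‖ ≤ ‖y - θtilde (k + 1)‖)
    (θstar : EuclideanSpace ℝ (Fin d)) (hθstar : θstar ∈ Θ) :
    ∑ k ∈ Finset.Icc 1 K, l k (θ k) - ∑ k ∈ Finset.Icc 1 K, l k θstar ≤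
      (2 * B₁ ^ 2 / μ₁ + μ₁ * C ^ 2) * Real.sqrt K :=
  stmt18_general Θ hcv B₁ hbound K l C hconv hlip μ₁ hμ₁ θ θtilde hθ1 hmin hprojmem hproj θstar
    hθstar
end
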